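/- arXiv:2204.13609 — 2 statements merged into one kernel-verified Lean document; each statement's English description precedes it below -/
import Mathlib

section
/- The lightcone Klein pair is not reductive: in the Lie algebra so(d+1,1) with brackets [H,B_a] = B_a, [H,P_a] = -P_a, [B_a,P_b] = δ_{ab}H + L_{ab} (in addition to so(d) relations), and h = span{L_{ab}, B_a}, there is no h-invariant complement m to h (for d ≥ 2): no subspace m with k = h ⊕ m satisfies [h,m] ⊆ m. -/
open Matrix

/-- `(A, b, p, h)` represents `½ A^{ab} L_{ab} + b^a B_a + p^a P_a + h H`. -/
abbrev Kin (d : ℕ) := Matrix (Fin d) (Fin d) ℝ × (Fin d → ℝ) × (Fin d → ℝ) × ℝ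

/-- The lightcone bracket on so(d+1,1): so(d) brackets on `L`, vector brackets of `L`
with `B` and `P`, and `[H,B_a] = B_a`, `[H,P_a] = -P_a`,
`[B_a,P_b] = δ_{ab}H + L_{ab}`. -/
def lcBracket {d : ℕ} (x y : Kin d) : Kin d :=
  (x.1 * y.1 - y.1 * x.1
     + (Matrix.vecMulVec x.2.1 y.2.2.1 - Matrix.vecMulVec y.2.2.1 x.2.1)
     - (Matrix.vecMulVec y.2.1 x.2.2.1 - Matrix.vecMulVec x.2.2.1 y.2.1),
   x.1.mulVec y.2.1 - y.1.mulVec x.2.1 + x.2.2.2 • y.2.1 - y.2.2.2 • x.2.1,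
   x.1.mulVec y.2.2.1 - y.1.mulVec x.2.2.1 - (x.2.2.2 • y.2.2.1 - y.2.2.2 • x.2.2.1),
   ∑ a, (x.2.1 a * y.2.2.1 a - y.2.1 a * x.2.2.1 a))

/-- The whole kinematical Lie algebra k = so(d+1,1): skew rotational part. -/
def kinSpace (d : ℕ) : Submodule ℝ (Kin d) where
  carrier := {x | x.1ᵀ = -x.1}
  add_mem' := by
    intro a b ha hb
    simp only [Set.mem_setOf_eq] at *
    show (a.1 + b.1)ᵀ = -(a.1 + b.1)
    rw [Matrix.transpose_add, ha, hb]; abel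
  zero_mem' := by
    show (0 : Matrix (Fin _) (Fin _) ℝ)ᵀ = -0
    simp
  smul_mem' := by
    intro c a ha
    simp only [Set.mem_setOf_eq] at *
    show (c • a.1)ᵀ = -(c • a.1)
    rw [Matrix.transpose_smul, ha, smul_neg]

/-- The subalgebra h = span{L_{ab}, B_a}. -/
def hPart (d : ℕ) : Submodule ℝ (Kin d) where
  carrier := {x | x.1ᵀ = -x.1 ∧ x.2.2.1 = 0 ∧ x.2.2.2 = 0}
  add_mem' := by
    rintro a b ⟨ha1, ha2, ha3⟩ ⟨hb1, hb2, hb3⟩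
    refine ⟨?_, ?_, ?_⟩
    · show (a.1 + b.1)ᵀ = -(a.1 + b.1)
      rw [Matrix.transpose_add, ha1, hb1]; abel
    · show a.2.2.1 + b.2.2.1 = 0
      rw [ha2, hb2]; abel
    · show a.2.2.2 + b.2.2.2 = 0
      rw [ha3, hb3]; abel
  zero_mem' := by
    refine ⟨?_, rfl, rfl⟩
    show (0 : Matrix (Fin _) (Fin _) ℝ)ᵀ = -0
    simp
  smul_mem' := by
    rintro c a ⟨ha1, ha2, ha3⟩
    refine ⟨?_, ?_, ?_⟩
    · show (c • a.1)ᵀ = -(c • a.1)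
      rw [Matrix.transpose_smul, ha1, smul_neg]
    · show c • a.2.2.1 = 0
      rw [ha2, smul_zero]
    · show c • a.2.2.2 = 0
      rw [ha3, smul_zero]

/-- The lightcone Klein pair (so(d+1,1), span{L,B}) is not reductive for d ≥ 2: there is
no complement m to h inside k with [h,m] ⊆ m. -/
theorem lightcone_not_reductive (d : ℕ) (hd : 2 ≤ d) :
    ¬ ∃ m : Submodule ℝ (Kin d),
        m ≤ kinSpace d ∧
        hPart d ⊓ m = ⊥ ∧
        hPart d ⊔ m = kinSpace d ∧
        ∀ x ∈ hPart d, ∀ y ∈ m, lcBracket x y ∈ m := by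
  rintro ⟨m, hmk, hinf, hsup, hbr⟩
  have hH : ((0, 0, 0, 1) : Kin d) ∈ kinSpace d := by
    show (0 : Matrix (Fin d) (Fin d) ℝ)ᵀ = -0
    simp
  rw [← hsup] at hH
  obtain ⟨x, hx, y, hy, hxy⟩ := Submodule.mem_sup.mp hH
  obtain ⟨hx1, hx2, hx3⟩ := hx
  have hy3 : y.2.2.1 = 0 := by
    have h := congrArg (fun z : Kin d => z.2.2.1) hxy
    simp only at h
    have : x.2.2.1 + y.2.2.1 = 0 := h
    rw [hx2] at this
    simpa using this
  have hy4 : y.2.2.2 = 1 := by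
    have h := congrArg (fun z : Kin d => z.2.2.2) hxy
    simp only at h
    have : x.2.2.2 + y.2.2.2 = 1 := h
    rw [hx3] at this
    simpa using this
  have hskew : y.1ᵀ = -y.1 := hmk hy
  have hd0 : 0 < d := by omega
  set a : Fin d := ⟨0, hd0⟩ with ha
  have hB : ((0, Pi.single a 1, 0, 0) : Kin d) ∈ hPart d := by
    refine ⟨?_, rfl, rfl⟩
    show (0 : Matrix (Fin d) (Fin d) ℝ)ᵀ = -0
    simp
  have hz := hbr _ hB _ hy
  have hzh : lcBracket ((0, Pi.single a 1, 0, 0) : Kin d) y ∈ hPart d := by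
    refine ⟨?_, ?_, ?_⟩ <;>
      simp [lcBracket, hy3, Matrix.vecMulVec, funext_iff]
  have hz0 : lcBracket ((0, Pi.single a 1, 0, 0) : Kin d) y = 0 := by
    have hmem : lcBracket ((0, Pi.single a 1, 0, 0) : Kin d) y ∈ hPart d ⊓ m := ⟨hzh, hz⟩
    rw [hinf] at hmem
    exact hmem
  have hcomp := congrArg (fun z : Kin d => z.2.1 a) hz0
  simp [lcBracket, hy3, hy4, Matrix.mulVec, dotProduct] at hcomp
  have hdiag : y.1 a a = 0 := by
    have h := congrFun (congrFun hskew a) a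
    simp [Matrix.transpose_apply] at h
    linarith
  rw [hdiag] at hcomp
  norm_num at hcomp
end

section
/- The set G = { [[1, 0],[v, A]] : v ∈ ℝ^d, A ∈ O(d) } of (d+1)×(d+1) block matrices is exactly the subgroup of GL(d+1,ℝ) that fixes the covector α⁰ = (1,0,...,0) ∈ (ℝ^{d+1})* and the symmetric bivector λ = Σ_{a=1}^d e_a ⊗ e_a ∈ Sym²(ℝ^{d+1}). -/
open Matrix

/-- The homogeneous Galilei matrix [[1, 0],[v, A]] on ℝ^{d+1} = ℝ ⊕ ℝ^d. -/
def galHomForm {d : ℕ} (v : Fin d → ℝ) (A : Matrix (Fin d) (Fin d) ℝ) :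
    Matrix (Fin 1 ⊕ Fin d) (Fin 1 ⊕ Fin d) ℝ :=
  Matrix.fromBlocks 1 0 (Matrix.of fun i (_ : Fin 1) => v i) A

/-- The invariant symmetric bivector λ = Σ_{a=1}^d e_a ⊗ e_a, encoded as the symmetric
matrix diag(0, 1, ..., 1); the induced GL action on bivectors is g·Λ = g Λ gᵀ. -/
def lamMat (d : ℕ) : Matrix (Fin 1 ⊕ Fin d) (Fin 1 ⊕ Fin d) ℝ :=
  Matrix.fromBlocks 0 0 0 1

/-- The homogeneous Galilei group { [[1,0],[v,A]] : v ∈ ℝ^d, A ∈ O(d) } is exactly the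
subgroup of GL(d+1,ℝ) fixing the covector α⁰ (equivalently, α⁰ ∘ g = α⁰) and the
symmetric bivector λ = Σ e_a ⊗ e_a (equivalently, g λ gᵀ = λ). -/
theorem homogeneous_galilei_group_characterisation (d : ℕ)
    (g : Matrix.GeneralLinearGroup (Fin 1 ⊕ Fin d) ℝ) :
    ((∀ w : Fin 1 ⊕ Fin d → ℝ, (g.val.mulVec w) (Sum.inl 0) = w (Sum.inl 0)) ∧
      g.val * lamMat d * g.valᵀ = lamMat d) ↔
    ∃ (v : Fin d → ℝ) (A : Matrix (Fin d) (Fin d) ℝ),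
      A ∈ Matrix.orthogonalGroup (Fin d) ℝ ∧ g.val = galHomForm v A := by
  set M := g.val with hM
  constructor
  · rintro ⟨h1, h2⟩
    -- top row of M is (1, 0, ..., 0)
    have htop1 : M (Sum.inl 0) (Sum.inl 0) = 1 := by
      have := h1 (Pi.single (Sum.inl 0) 1)
      simpa [Matrix.mulVec, dotProduct, Pi.single_apply] using this
    have htop0 : ∀ j : Fin d, M (Sum.inl 0) (Sum.inr j) = 0 := by
      intro j
      have := h1 (Pi.single (Sum.inr j) 1)
      simpa [Matrix.mulVec, dotProduct, Pi.single_apply] using this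
    have hb : M.toBlocks₁₂ = 0 := by
      ext i j
      have : i = 0 := Subsingleton.elim _ _
      subst this
      simpa [Matrix.toBlocks₁₂] using htop0 j
    -- block computation
    have hblocks := h2
    rw [← Matrix.fromBlocks_toBlocks M] at hblocks
    rw [hb] at hblocks
    simp only [lamMat, Matrix.fromBlocks_transpose, Matrix.fromBlocks_multiply] at hblocks
    have hDD : M.toBlocks₂₂ * M.toBlocks₂₂ᵀ = 1 := by
      have := congrArg Matrix.toBlocks₂₂ hblocks
      simpa using this
    refine ⟨fun i => M (Sum.inr i) (Sum.inl 0), M.toBlocks₂₂, ?_, ?_⟩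
    · rw [Matrix.mem_orthogonalGroup_iff]
      simpa [Matrix.star_eq_conjTranspose, Matrix.conjTranspose] using hDD
    · ext i j
      rcases i with i | i <;> rcases j with j | j
      · have hi : i = 0 := Subsingleton.elim _ _
        have hj : j = 0 := Subsingleton.elim _ _
        subst hi; subst hj
        simpa [galHomForm, Matrix.fromBlocks] using htop1
      · have hi : i = 0 := Subsingleton.elim _ _
        subst hi
        simpa [galHomForm, Matrix.fromBlocks] using htop0 j
      · have hj : j = 0 := Subsingleton.elim _ _
        subst hj
        simp [galHomForm, Matrix.fromBlocks]
      · simp [galHomForm, Matrix.fromBlocks, Matrix.toBlocks₂₂]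
  · rintro ⟨v, A, hA, hMg⟩
    have hAA : A * Aᵀ = 1 := by
      have := (Matrix.mem_orthogonalGroup_iff _ _).mp hA
      simpa [Matrix.star_eq_conjTranspose, Matrix.conjTranspose] using this
    constructor
    · intro w
      rw [hMg]
      simp [galHomForm, Matrix.mulVec, dotProduct, Fintype.sum_sum_type,
        Matrix.fromBlocks, Matrix.one_apply]
    · rw [hMg]
      simp only [galHomForm, lamMat, Matrix.fromBlocks_transpose,
        Matrix.fromBlocks_multiply]
      simp [hAA]
end
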